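/- Let Ω₀ ⊆ [0,p) be measurable such that the translates Ω₀ + k, k ∈ ℤ, are pairwise disjoint. Define R = [0,1) \ ((Ω₀ + ℤ) ∩ [0,1)). Then Ω₀ ∪ R tiles ℝ by ℤ, i.e., the sets (Ω₀ ∪ R) + k, k ∈ ℤ, partition ℝ up to measure zero. -/
import Mathlib


open MeasureTheory Set
noncomputable section

/-- Translate of a set of reals by `t`. -/
def tr (t : ℝ) (A : Set ℝ) : Set ℝ := (fun x => x + t) '' A

lemma mem_tr {t x : ℝ} {A : Set ℝ} : x ∈ tr t A ↔ x - t ∈ A := by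
  constructor
  · rintro ⟨a, ha, rfl⟩; simpa using ha
  · intro h; exact ⟨x - t, h, by ring⟩

/-- If `Ω₀ ⊆ [0,p)` has pairwise disjoint (up to measure zero) integer
translates, and `R = [0,1) \ ((Ω₀ + ℤ) ∩ [0,1))`, then `Ω₀ ∪ R` tiles `ℝ`
by `ℤ`: the translates `(Ω₀ ∪ R) + k` partition `ℝ` up to measure zero. -/
theorem stmt15 (p : ℝ) (hp : 1 ≤ p) (Ω₀ : Set ℝ) (hΩ₀m : MeasurableSet Ω₀)
    (hsub : Ω₀ ⊆ Ico 0 p)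
    (hdisj : ∀ k l : ℤ, k ≠ l → volume (tr (k : ℝ) Ω₀ ∩ tr (l : ℝ) Ω₀) = 0)
    (R : Set ℝ) (hR : R = Ico (0 : ℝ) 1 \ ((⋃ k : ℤ, tr (k : ℝ) Ω₀) ∩ Ico (0 : ℝ) 1)) :
    (∀ k l : ℤ, k ≠ l →
      volume (tr (k : ℝ) (Ω₀ ∪ R) ∩ tr (l : ℝ) (Ω₀ ∪ R)) = 0) ∧
    volume ((⋃ k : ℤ, tr (k : ℝ) (Ω₀ ∪ R))ᶜ) = 0 := by
  -- R avoids all integer translates of Ω₀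
  have hRnot : ∀ (y : ℝ) (m : ℤ), y ∈ R → y - m ∉ Ω₀ := by
    intro y m hy hmem
    rw [hR] at hy
    exact hy.2 ⟨mem_iUnion.2 ⟨m, mem_tr.2 hmem⟩, hy.1⟩
  have hRIco : ∀ y : ℝ, y ∈ R → y ∈ Ico (0:ℝ) 1 := by
    intro y hy; rw [hR] at hy; exact hy.1
  constructor
  · intro k l hkl
    have hsubset : tr (k:ℝ) (Ω₀ ∪ R) ∩ tr (l:ℝ) (Ω₀ ∪ R) ⊆ tr (k:ℝ) Ω₀ ∩ tr (l:ℝ) Ω₀ := by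
      rintro x ⟨hxk, hxl⟩
      rw [mem_tr] at hxk hxl
      rcases hxk with hk | hk <;> rcases hxl with hl | hl
      · exact ⟨mem_tr.2 hk, mem_tr.2 hl⟩
      · exfalso
        apply hRnot (x - l) (k - l) hl
        have he : x - (l:ℝ) - ((k - l : ℤ) : ℝ) = x - k := by push_cast; ring
        rw [he]; exact hk
      · exfalso
        apply hRnot (x - k) (l - k) hk
        have he : x - (k:ℝ) - ((l - k : ℤ) : ℝ) = x - l := by push_cast; ring
        rw [he]; exact hl
      · exfalso
        have h1 := hRIco _ hk
        have h2 := hRIco _ hl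
        have habs : |((l : ℝ) - k)| < 1 := by
          rw [abs_lt]
          constructor <;> nlinarith [h1.1, h1.2, h2.1, h2.2]
        have : |(l - k : ℤ)| < 1 := by exact_mod_cast (by push_cast; exact habs : |((l - k : ℤ) : ℝ)| < 1)
        have : l - k = 0 := by
          have := abs_lt.mp this; omega
        exact hkl (by omega)
    exact measure_mono_null hsubset (hdisj k l hkl)
  · have huniv : (⋃ k : ℤ, tr (k:ℝ) (Ω₀ ∪ R)) = univ := by
      ext x
      simp only [mem_univ, iff_true, mem_iUnion]
      by_cases h : ∃ m : ℤ, x - ⌊x⌋ - m ∈ Ω₀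
      · obtain ⟨m, hm⟩ := h
        refine ⟨⌊x⌋ + m, mem_tr.2 (Or.inl ?_)⟩
        push_cast
        convert hm using 1
        ring
      · refine ⟨⌊x⌋, mem_tr.2 (Or.inr ?_)⟩
        rw [hR]
        refine ⟨⟨sub_nonneg.mpr (Int.floor_le x), sub_lt_iff_lt_add.mpr (by linarith [Int.lt_floor_add_one x])⟩, ?_⟩
        rintro ⟨hmem, -⟩
        obtain ⟨m, hm⟩ := mem_iUnion.1 hmem
        exact h ⟨m, mem_tr.1 hm⟩
    rw [huniv, compl_univ]
    exact measure_empty
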